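/- Quantitative ergodicity of random rotations (verification of Hypothesis 2 with rate η(t) = K/√t): let θ > 0 and let Z be a symmetric Gamma-type process as in the context. Then there exists a constant K > 0, depending only on θ, such that for all t ≥ 1: E[ ( (1/t) ∫_0^t cos²(Z_s) ds − 1/2 )² ] ≤ K/t. -/

import Mathlib

open MeasureTheory Filter Real ProbabilityTheory

/-!
Since `cos² z - 1/2 = cos (2z) / 2`, the quantity to bound is
`(2t)⁻² ∫∫_{[0,t]²} E[cos (2 Z_s) cos (2 Z_σ)] ds dσ`. Writing `Z_σ = Z_s + (Z_σ - Z_s)` with an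
increment independent of `Z_s`, each correlation is at most the modulus of the characteristic
function of the increment at `2`, namely `(1 + 4/θ²)^(-|σ - s|) = exp (-c |σ - s|)` with
`c = log (1 + 4/θ²)`. This kernel has total mass `2/c` on every line, so the double integral is at
most `2t/c`, which gives the bound with `K = 1/(2c)`.
-/

theorem integral_exp_neg_mul_abs {c : ℝ} (hc : 0 < c) : ∫ x, exp (-c * |x|) = 2 / c := by
  rw [integral_comp_abs (f := fun x => exp (-c * x)), integral_exp_mul_Ioi (neg_lt_zero.2 hc)]
  field_simp
  simp

-- The Bochner integral of a non-integrable function is `0`, and this one is `2 / c`.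
theorem integrable_exp_neg_mul_abs {c : ℝ} (hc : 0 < c) :
    Integrable fun x : ℝ => exp (-c * |x|) :=
  .of_integral_ne_zero (by rw [integral_exp_neg_mul_abs hc]; positivity)

theorem integrable_exp_neg_mul_abs_sub {c : ℝ} (hc : 0 ≤ c) (ρ : Measure (ℝ × ℝ))
    [IsFiniteMeasure ρ] : Integrable (fun p : ℝ × ℝ => exp (-c * |p.2 - p.1|)) ρ := by
  refine (integrable_const (1 : ℝ)).mono' (by fun_prop) (.of_forall fun p => ?_)
  rw [norm_of_nonneg (exp_pos _).le, exp_le_one_iff]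
  exact mul_nonpos_of_nonpos_of_nonneg (neg_nonpos.2 hc) (abs_nonneg _)

theorem integral_exp_neg_mul_abs_sub_le {c t : ℝ} (hc : 0 < c) (ht : 0 ≤ t) :
    ∫ p, exp (-c * |p.2 - p.1|)
        ∂((volume.restrict (Set.Ioc 0 t)).prod (volume.restrict (Set.Ioc 0 t))) ≤ 2 / c * t := by
  set ν := volume.restrict (Set.Ioc (0 : ℝ) t)
  have hint := integrable_exp_neg_mul_abs_sub hc.le (ν.prod ν)
  have hinner (s : ℝ) : ∫ σ, exp (-c * |σ - s|) ∂ν ≤ 2 / c := calc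
    _ ≤ ∫ σ, exp (-c * |σ - s|) :=
      setIntegral_le_integral ((integrable_exp_neg_mul_abs hc).comp_sub_right s)
        (.of_forall fun _ => (exp_pos _).le)
    _ = 2 / c := by
      rw [integral_sub_right_eq_self (fun x => exp (-c * |x|)), integral_exp_neg_mul_abs hc]
  calc _ = ∫ s, ∫ σ, exp (-c * |σ - s|) ∂ν ∂ν := integral_prod _ hint
    _ ≤ ∫ _, 2 / c ∂ν := integral_mono hint.integral_prod_left (integrable_const _) hinner
    _ = 2 / c * t := by simp [ν, ht, mul_comm]

section TimeAverage

variable {Ω : Type*} [MeasurableSpace Ω] {μ : Measure Ω}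

theorem integral_sq_intervalIntegral_le_of_abs_integral_mul_le [IsFiniteMeasure μ]
    {g : ℝ → Ω → ℝ} (hg : Measurable (Function.uncurry g)) (hg_le : ∀ s ω, |g s ω| ≤ 1)
    {c t : ℝ} (hc : 0 < c) (ht : 0 ≤ t)
    (hcorr : ∀ s σ, 0 ≤ s → 0 ≤ σ → |∫ ω, g s ω * g σ ω ∂μ| ≤ exp (-c * |σ - s|)) :
    ∫ ω, (∫ s in 0..t, g s ω) ^ 2 ∂μ ≤ 2 / c * t := by
  set ν := volume.restrict (Set.Ioc (0 : ℝ) t)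
  have hsq (ω : Ω) : (∫ s in 0..t, g s ω) ^ 2 = ∫ p, g p.1 ω * g p.2 ω ∂(ν.prod ν) := by
    rw [sq, intervalIntegral.integral_of_le ht]
    exact (integral_prod_mul (fun s => g s ω) (fun s => g s ω)).symm
  have hprod_meas : Measurable fun q : Ω × ℝ × ℝ => g q.2.1 q.1 * g q.2.2 q.1 :=
    (hg.comp (measurable_snd.fst.prodMk measurable_fst)).mul
      (hg.comp (measurable_snd.snd.prodMk measurable_fst))
  have hint : Integrable (Function.uncurry fun ω (p : ℝ × ℝ) => g p.1 ω * g p.2 ω)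
      (μ.prod (ν.prod ν)) :=
    (integrable_const (1 : ℝ)).mono' hprod_meas.aestronglyMeasurable (.of_forall fun q => by
      simpa only [Function.uncurry_def, norm_eq_abs, abs_mul] using
        mul_le_one₀ (hg_le q.2.1 q.1) (abs_nonneg _) (hg_le q.2.2 q.1))
  have hcorr_ae : ∀ᵐ p ∂(ν.prod ν), ∫ ω, g p.1 ω * g p.2 ω ∂μ ≤ exp (-c * |p.2 - p.1|) := by
    rw [Measure.prod_restrict]
    filter_upwards [ae_restrict_mem (measurableSet_Ioc.prod measurableSet_Ioc)] with p hp
    exact (le_abs_self _).trans (hcorr _ _ hp.1.1.le hp.2.1.le)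
  calc ∫ ω, (∫ s in 0..t, g s ω) ^ 2 ∂μ
      = ∫ p, ∫ ω, g p.1 ω * g p.2 ω ∂μ ∂(ν.prod ν) := by
        simp_rw [hsq]; exact integral_integral_swap hint
    _ ≤ ∫ p, exp (-c * |p.2 - p.1|) ∂(ν.prod ν) :=
        integral_mono_ae hint.integral_prod_right (integrable_exp_neg_mul_abs_sub hc.le _)
          hcorr_ae
    _ ≤ 2 / c * t := integral_exp_neg_mul_abs_sub_le hc ht

theorem abs_integral_mul_cos_add_le [IsProbabilityMeasure μ] {X Y : Ω → ℝ}
    (hXY : IndepFun X Y μ) (hX : Measurable X) (hY : Measurable Y)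
    {f : ℝ → ℝ} (hf : Measurable f) (hf_le : ∀ x, |f x| ≤ 1) (u : ℝ) :
    |∫ ω, f (X ω) * cos (u * (X ω + Y ω)) ∂μ| ≤
      ‖∫ ω, Complex.exp (Complex.I * u * Y ω) ∂μ‖ := by
  set F : ℝ → ℂ := fun x => f x * Complex.exp (Complex.I * u * x)
  set G : ℝ → ℂ := fun y => Complex.exp (Complex.I * u * y)
  have hG_norm (y : ℝ) : ‖G y‖ = 1 := by
    simp [G, Complex.norm_exp]
  have hF_le (x : ℝ) : ‖F x‖ ≤ 1 := by
    simpa [F, Complex.norm_exp] using hf_le x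
  have hre (ω : Ω) : f (X ω) * cos (u * (X ω + Y ω)) = (F (X ω) * G (Y ω)).re := by
    have : F (X ω) * G (Y ω) = f (X ω) * Complex.exp ((u * (X ω + Y ω) : ℝ) * Complex.I) := by
      simp only [F, G, mul_assoc, ← Complex.exp_add]
      push_cast; ring_nf
    rw [this, Complex.re_ofReal_mul, Complex.exp_ofReal_mul_I_re]
  have hint : Integrable (fun ω => F (X ω) * G (Y ω)) μ :=
    (integrable_const (1 : ℝ)).mono' (by fun_prop) (.of_forall fun ω => by
      simpa only [norm_mul, hG_norm, mul_one] using hF_le (X ω))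
  calc |∫ ω, f (X ω) * cos (u * (X ω + Y ω)) ∂μ|
      = |(∫ ω, F (X ω) * G (Y ω) ∂μ).re| := by
        simp_rw [hre]; exact congrArg _ (integral_re hint)
    _ ≤ ‖∫ ω, F (X ω) * G (Y ω) ∂μ‖ := Complex.abs_re_le_norm _
    _ = ‖∫ ω, F (X ω) ∂μ‖ * ‖∫ ω, G (Y ω) ∂μ‖ := by
        rw [hXY.integral_fun_comp_mul_comp hX.aemeasurable hY.aemeasurable (by fun_prop)
          (by fun_prop), norm_mul]
    _ ≤ ‖∫ ω, G (Y ω) ∂μ‖ := by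
        refine mul_le_of_le_one_left (norm_nonneg _) ?_
        simpa using norm_integral_le_of_norm_le_const (μ := μ) (.of_forall fun ω => hF_le (X ω))

theorem abs_integral_cos_mul_cos_le [IsProbabilityMeasure μ] {Z : ℝ → Ω → ℝ}
    (hZ : ∀ s, Measurable (Z s))
    (hindep : ∀ s σ : ℝ, 0 ≤ s → s ≤ σ → IndepFun (fun ω => Z σ ω - Z s ω) (Z s) μ)
    {u c : ℝ} (hdecay : ∀ s σ : ℝ, 0 ≤ s → s ≤ σ →
      ‖∫ ω, Complex.exp (Complex.I * u * ((Z σ ω - Z s ω : ℝ) : ℂ)) ∂μ‖ ≤ exp (-c * (σ - s)))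
    {s σ : ℝ} (hs : 0 ≤ s) (hσ : 0 ≤ σ) :
    |∫ ω, cos (u * Z s ω) * cos (u * Z σ ω) ∂μ| ≤ exp (-c * |σ - s|) := by
  wlog hsσ : s ≤ σ generalizing s σ
  · simpa only [mul_comm (cos (u * Z s _)), abs_sub_comm] using this hσ hs (le_of_not_ge hsσ)
  have hcos (ω : Ω) : cos (u * Z σ ω) = cos (u * (Z s ω + (Z σ ω - Z s ω))) := by
    rw [add_sub_cancel]
  simp_rw [hcos, abs_of_nonneg (sub_nonneg.2 hsσ)]
  exact (abs_integral_mul_cos_add_le (hindep s σ hs hsσ).symm (hZ s) ((hZ σ).sub (hZ s))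
    (continuous_cos.measurable.comp (measurable_const_mul u)) (fun _ => abs_cos_le_one _) u).trans
    (hdecay s σ hs hsσ)

end TimeAverage

theorem one_div_mul_intervalIntegral_cos_sq_sub_half {f : ℝ → ℝ} (hf : Measurable f) {t : ℝ}
    (ht : t ≠ 0) :
    1 / t * (∫ s in 0..t, cos (f s) ^ 2) - 1 / 2 = (∫ s in 0..t, cos (2 * f s)) / (2 * t) := by
  have hint : IntervalIntegrable (fun s => cos (2 * f s)) volume 0 t := by
    refine (intervalIntegrable_const (c := (1 : ℝ))).mono_fun (by fun_prop) (.of_forall fun s => ?_)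
    simpa using abs_cos_le_one (2 * f s)
  simp_rw [cos_sq]
  rw [intervalIntegral.integral_add intervalIntegrable_const (hint.div_const 2),
    intervalIntegral.integral_const, intervalIntegral.integral_div, smul_eq_mul]
  field_simp
  ring

theorem gamma_rotation_quantitative_ergodicity_general
    (Ω : Type*) [MeasurableSpace Ω] (μ : Measure Ω) [IsProbabilityMeasure μ]
    (θ : ℝ) (hθ : 0 < θ) (Z : ℝ → Ω → ℝ)
    (hZmeas : Measurable (Function.uncurry Z))
    (hindep : ∀ s σ : ℝ, 0 ≤ s → s ≤ σ →
      IndepFun (fun ω => Z σ ω - Z s ω) (Z s) μ)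
    (hchar : ∀ (u s σ : ℝ), 0 ≤ s → s ≤ σ →
      (∫ ω, Complex.exp (Complex.I * (u : ℂ) * ((Z σ ω - Z s ω : ℝ) : ℂ)) ∂μ) =
        (((1 + u ^ 2 / θ ^ 2) ^ (-(σ - s)) : ℝ) : ℂ)) :
    ∃ K : ℝ, 0 < K ∧ ∀ t : ℝ, 1 ≤ t →
      (∫ ω, ((1 / t) * (∫ s in (0 : ℝ)..t, (Real.cos (Z s ω)) ^ 2) - 1 / 2) ^ 2 ∂μ)
        ≤ K / t := by
  have hZ (s : ℝ) : Measurable (Z s) := hZmeas.comp measurable_prodMk_left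
  set a : ℝ := 1 + 2 ^ 2 / θ ^ 2
  have ha : 1 < a := lt_add_of_pos_right 1 (by positivity)
  set c := log a
  have hc : 0 < c := log_pos ha
  have hdecay (s σ : ℝ) (hs : 0 ≤ s) (hsσ : s ≤ σ) :
      ‖∫ ω, Complex.exp (Complex.I * (2 : ℝ) * ((Z σ ω - Z s ω : ℝ) : ℂ)) ∂μ‖ ≤
        exp (-c * (σ - s)) := by
    rw [hchar 2 s σ hs hsσ, Complex.norm_real, norm_of_nonneg (by positivity),
      rpow_def_of_pos (by positivity), mul_neg, neg_mul]
  refine ⟨1 / (2 * c), by positivity, fun t ht => ?_⟩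
  have ht0 : 0 < t := one_pos.trans_le ht
  calc ∫ ω, (1 / t * (∫ s in 0..t, cos (Z s ω) ^ 2) - 1 / 2) ^ 2 ∂μ
      = (∫ ω, (∫ s in 0..t, cos (2 * Z s ω)) ^ 2 ∂μ) / (2 * t) ^ 2 := by
        rw [← integral_div]
        congr 1 with ω
        rw [one_div_mul_intervalIntegral_cos_sq_sub_half (f := fun s => Z s ω)
          (hZmeas.comp measurable_prodMk_right) ht0.ne', div_pow]
    _ ≤ (2 / c * t) / (2 * t) ^ 2 := by
        gcongr
        exact integral_sq_intervalIntegral_le_of_abs_integral_mul_le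
          (g := fun s ω => cos (2 * Z s ω)) (continuous_cos.measurable.comp (hZmeas.const_mul 2))
          (fun _ _ => abs_cos_le_one _) hc ht0.le
          (fun _ _ hs hσ => abs_integral_cos_mul_cos_le hZ hindep hdecay hs hσ)
    _ = 1 / (2 * c) / t := by field_simp

/-- Quantitative ergodicity of random rotations (verification of Hypothesis 2
with rate `η(t) = K/√t`): for a symmetric Gamma-type process `Z`, there is a
constant `K > 0`, depending only on `θ`, such that for all `t ≥ 1` the second
moment of the deviation of the time average of `cos²(Z_s)` from `1/2` is at
most `K/t`. -/
theorem gamma_rotation_quantitative_ergodicity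
    (Ω : Type*) [MeasurableSpace Ω] (μ : Measure Ω) [IsProbabilityMeasure μ]
    (θ : ℝ) (hθ : 0 < θ) (Z : ℝ → Ω → ℝ)
    (hZmeas : Measurable (Function.uncurry Z))
    (hZ0 : ∀ᵐ ω ∂μ, Z 0 ω = 0)
    (hindep : ∀ s σ : ℝ, 0 ≤ s → s ≤ σ →
      IndepFun (fun ω => Z σ ω - Z s ω) (Z s) μ)
    (hchar : ∀ (u s σ : ℝ), 0 ≤ s → s ≤ σ →
      (∫ ω, Complex.exp (Complex.I * (u : ℂ) * ((Z σ ω - Z s ω : ℝ) : ℂ)) ∂μ) =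
        (((1 + u ^ 2 / θ ^ 2) ^ (-(σ - s)) : ℝ) : ℂ)) :
    ∃ K : ℝ, 0 < K ∧ ∀ t : ℝ, 1 ≤ t →
      (∫ ω, ((1 / t) * (∫ s in (0 : ℝ)..t, (Real.cos (Z s ω)) ^ 2) - 1 / 2) ^ 2 ∂μ)
        ≤ K / t :=
  gamma_rotation_quantitative_ergodicity_general Ω μ θ hθ Z hZmeas hindep hchar
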